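/- arXiv:1906.03976 — 2 statements merged into one kernel-verified Lean document; each statement's English description precedes it below -/
import Mathlib

section
/- For every real p ≥ 2 there is a constant C > 0 such that for all real a, b: | |a+b|^(p-1)(a+b) − |a|^(p-1)a − p|a|^(p-1)b | ≤ C(|a|^(p-2) b² + |b|^p). -/
open Real Set Filter Topology

/-!
Write `f x = |x| ^ (p - 1) * x`, so that `f' x = p * |x| ^ (p - 1)` and the left-hand side is the
increment of `g x = f x - f' a * x` from `a` to `a + b`. On that segment `|x| ≤ |a| + |b|`, and
`t ↦ t ^ (p - 1)` is `(p - 1) (|a| + |b|) ^ (p - 2)`-Lipschitz on `[0, |a| + |b|]`, so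
`|g'| ≤ p (p - 1) (|a| + |b|) ^ (p - 2) |b|` there. The mean value inequality bounds the increment
by `p (p - 1) (|a| + |b|) ^ (p - 2) b²`, and
`(|a| + |b|) ^ (p - 2) ≤ 2 ^ (p - 2) (|a| ^ (p - 2) + |b| ^ (p - 2))` splits this into the two
terms, using `|b| ^ (p - 2) b² = |b| ^ p`.
-/

namespace Real

lemma add_rpow_le_two_rpow_mul_rpow_add_rpow {x y q : ℝ} (hx : 0 ≤ x) (hy : 0 ≤ y)
    (hq : 0 ≤ q) :
    (x + y) ^ q ≤ 2 ^ q * (x ^ q + y ^ q) := calc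
  (x + y) ^ q ≤ (2 * max x y) ^ q := by
    rw [two_mul]; gcongr <;> simp
  _ = 2 ^ q * max (x ^ q) (y ^ q) := by
    rw [mul_rpow zero_le_two (le_max_of_le_left hx), rpow_max hx hy hq]
  _ ≤ 2 ^ q * (x ^ q + y ^ q) := by
    gcongr; exact max_le_add_of_nonneg (rpow_nonneg hx q) (rpow_nonneg hy q)

lemma abs_rpow_sub_rpow_le {q M s t : ℝ} (hq : 1 ≤ q) (hs : s ∈ Icc 0 M)
    (ht : t ∈ Icc 0 M) :
    |t ^ q - s ^ q| ≤ q * M ^ (q - 1) * |t - s| := by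
  have hderiv : ∀ x ∈ Icc 0 M, HasDerivWithinAt (· ^ q) (q * x ^ (q - 1)) (Icc 0 M) x :=
    fun x _ ↦ (hasDerivAt_rpow_const (Or.inr hq)).hasDerivWithinAt
  have hbound : ∀ x ∈ Icc 0 M, ‖q * x ^ (q - 1)‖ ≤ q * M ^ (q - 1) := fun x hx ↦ by
    rw [norm_of_nonneg (mul_nonneg (by linarith) (rpow_nonneg hx.1 _))]
    gcongr
    exacts [hx.1, hx.2]
  exact (convex_Icc 0 M).norm_image_sub_le_of_norm_hasDerivWithin_le hderiv hbound hs ht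

lemma hasDerivAt_abs_rpow_mul_self {q : ℝ} (hq : 0 < q) (x : ℝ) :
    HasDerivAt (fun y ↦ |y| ^ q * y) ((q + 1) * |x| ^ q) x := by
  rcases eq_or_ne x 0 with rfl | hx
  · rw [hasDerivAt_iff_tendsto_slope_zero]
    simp only [abs_zero, zero_rpow hq.ne', mul_zero, zero_add, sub_zero]
    have hcont : Tendsto (fun t : ℝ ↦ |t| ^ q) (𝓝 0) (𝓝 0) := by
      simpa [zero_rpow hq.ne'] using
        ((continuous_abs.rpow_const fun _ ↦ Or.inr hq.le).tendsto (0 : ℝ))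
    refine (hcont.mono_left nhdsWithin_le_nhds).congr' ?_
    filter_upwards [self_mem_nhdsWithin] with t (ht : t ≠ 0)
    rw [smul_eq_mul, mul_left_comm, inv_mul_cancel₀ ht, mul_one]
  · have habs : |x| ≠ 0 := abs_ne_zero.2 hx
    refine (((hasDerivAt_abs hx).rpow_const (Or.inl habs)).mul (hasDerivAt_id x)).congr_deriv ?_
    rw [rpow_sub_one habs, id, mul_one]
    field_simp
    linear_combination q * sign_mul_self x

lemma abs_rpow_mul_self_taylor_le {p : ℝ} (hp : 2 ≤ p) (a b : ℝ) :
    |(|a + b| ^ (p - 1) * (a + b) - |a| ^ (p - 1) * a - p * |a| ^ (p - 1) * b)| ≤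
      p * (p - 1) * (|a| + |b|) ^ (p - 2) * b ^ 2 := by
  set M := |a| + |b|
  set g : ℝ → ℝ := fun x ↦ |x| ^ (p - 1) * x - p * |a| ^ (p - 1) * x
  have hg : ∀ x, HasDerivAt g (p * |x| ^ (p - 1) - p * |a| ^ (p - 1)) x := fun x ↦ by
    refine ((hasDerivAt_abs_rpow_mul_self (q := p - 1) (by linarith) x).sub
      ((hasDerivAt_id x).const_mul (p * |a| ^ (p - 1)))).congr_deriv ?_
    ring
  have hbound : ∀ x ∈ uIcc a (a + b),
      ‖p * |x| ^ (p - 1) - p * |a| ^ (p - 1)‖ ≤ p * (p - 1) * M ^ (p - 2) * |b| := by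
    intro x hx
    have hxa : |x - a| ≤ |b| := by simpa using abs_sub_left_of_mem_uIcc hx
    have hxM : |x| ≤ M := by linarith [abs_sub_abs_le_abs_sub x a]
    have hxa' : |(|x| - |a|)| ≤ |b| := (abs_abs_sub_abs_le_abs_sub x a).trans hxa
    have lip := abs_rpow_sub_rpow_le (q := p - 1) (M := M) (by linarith)
      ⟨abs_nonneg a, le_add_of_nonneg_right (abs_nonneg b)⟩ ⟨abs_nonneg x, hxM⟩
    rw [show p - 1 - 1 = p - 2 by ring] at lip
    calc ‖p * |x| ^ (p - 1) - p * |a| ^ (p - 1)‖ = p * |(|x| ^ (p - 1) - |a| ^ (p - 1))| := by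
          rw [norm_eq_abs, ← mul_sub, abs_mul, abs_of_pos (by linarith)]
      _ ≤ p * ((p - 1) * M ^ (p - 2) * |(|x| - |a|)|) := by gcongr
      _ ≤ p * ((p - 1) * M ^ (p - 2) * |b|) := by
          gcongr
          exact mul_nonneg (by linarith) (rpow_nonneg (by positivity) _)
      _ = p * (p - 1) * M ^ (p - 2) * |b| := by ring
  have hmv := (convex_uIcc a (a + b)).norm_image_sub_le_of_norm_hasDerivWithin_le
    (fun x _ ↦ (hg x).hasDerivWithinAt) hbound left_mem_uIcc right_mem_uIcc
  calc |(|a + b| ^ (p - 1) * (a + b) - |a| ^ (p - 1) * a - p * |a| ^ (p - 1) * b)|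
      = ‖g (a + b) - g a‖ := by simp only [g, norm_eq_abs]; ring_nf
    _ ≤ p * (p - 1) * M ^ (p - 2) * |b| * ‖a + b - a‖ := hmv
    _ = p * (p - 1) * M ^ (p - 2) * b ^ 2 := by
      rw [add_sub_cancel_left, norm_eq_abs, mul_assoc, abs_mul_abs_self, sq]

end Real

theorem stmt_2 (p : ℝ) (hp : 2 ≤ p) :
    ∃ C : ℝ, 0 < C ∧ ∀ a b : ℝ,
      |(|a + b| ^ (p - 1) * (a + b) - |a| ^ (p - 1) * a - p * |a| ^ (p - 1) * b)| ≤
        C * (|a| ^ (p - 2) * b ^ 2 + |b| ^ p) := by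
  have hp1 : 0 < p - 1 := by linarith
  refine ⟨p * (p - 1) * 2 ^ (p - 2), by positivity, fun a b ↦ ?_⟩
  have hpow : |b| ^ p = |b| ^ (p - 2) * b ^ 2 := by
    rw [← sq_abs, ← rpow_two, ← rpow_add' (abs_nonneg b) (by linarith), sub_add_cancel]
  calc _ ≤ p * (p - 1) * (|a| + |b|) ^ (p - 2) * b ^ 2 := abs_rpow_mul_self_taylor_le hp a b
    _ ≤ p * (p - 1) * (2 ^ (p - 2) * (|a| ^ (p - 2) + |b| ^ (p - 2))) * b ^ 2 := by
      gcongr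
      exact add_rpow_le_two_rpow_mul_rpow_add_rpow (abs_nonneg a) (abs_nonneg b) (by linarith)
    _ = p * (p - 1) * 2 ^ (p - 2) * (|a| ^ (p - 2) * b ^ 2 + |b| ^ p) := by rw [hpow]; ring
end

section
/- Let Φ : [τ₀,∞) → H be a C¹ curve in a Hilbert space H with ⟨Φ'(τ), Φ(τ)⟩ ≤ −(l+1)‖Φ(τ)‖² + e^(−τ) G(τ) ‖Φ(τ)‖, where G(τ) ≤ C e^(−(2l−1/2)τ) and Φ(τ₀) = 0, with l ≥ 1. Then ‖Φ(τ)‖ ≤ C' e^(−(l+1)τ) for all τ ≥ τ₀, for some constant C' depending only on C and l. -/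
/-!
After multiplying by the weight `exp ((l + 1) τ)`, the damping term disappears and
`ψ = exp ((l + 1) τ) Φ` satisfies `⟪ψ', ψ⟫ ≤ h ‖ψ‖` with `h τ = C exp (-(l - 1/2) τ)`.
Hence `‖ψ‖` grows at most like a primitive of `h`, which is bounded because `l - 1/2 > 0`;
since `ψ τ₀ = 0`, this gives `‖Φ τ‖ ≤ C / (l - 1/2) · exp (-(l - 1/2) τ₀) · exp (-(l + 1) τ)`.
The norm is not differentiable where `ψ` vanishes, so the comparison is made between `‖ψ‖ ^ 2`
and the square of a slightly faster-growing barrier.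
-/

open Real Set
open scoped RealInnerProductSpace

section

variable {E : Type*} [NormedAddCommGroup E] [InnerProductSpace ℝ E]

theorem norm_le_add_of_inner_deriv_le_mul_norm {f f' : ℝ → E} {H h : ℝ → ℝ} {a b : ℝ}
    (hf : ∀ t, a ≤ t → HasDerivAt f (f' t) t) (hH : ∀ t, a ≤ t → HasDerivAt H (h t) t)
    (hh : ∀ t, a ≤ t → 0 ≤ h t) (bound : ∀ t, a ≤ t → ⟪f' t, f t⟫ ≤ h t * ‖f t‖)
    (hab : a ≤ b) : ‖f b‖ ≤ ‖f a‖ + (H b - H a) := by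
  have hHmono : MonotoneOn H (Ici a) :=
    monotoneOn_of_hasDerivWithinAt_nonneg (convex_Ici a)
      (fun t ht => (hH t ht).continuousAt.continuousWithinAt)
      (fun t ht => (hH t (interior_subset ht)).hasDerivWithinAt)
      (fun t ht => hh t (interior_subset ht))
  -- The barrier `β` grows strictly faster than `H`, so `‖f‖ ^ 2` can never overtake `β ^ 2`.
  have hbarrier : ∀ ε > 0, ‖f b‖ ≤ ‖f a‖ + (H b - H a) + ε * (1 + (b - a)) := by
    intro ε hε
    set β : ℝ → ℝ := fun t => ‖f a‖ + (H t - H a) + ε * (1 + (t - a)) with hβ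
    have hβ_pos : ∀ t, a ≤ t → 0 < β t := fun t ht => by
      have : H a ≤ H t := hHmono self_mem_Ici ht ht
      have : 0 < ε * (1 + (t - a)) := mul_pos hε (by linarith)
      positivity
    have hβ_deriv : ∀ t, a ≤ t → HasDerivAt β (h t + ε) t := fun t ht => by
      refine ((((hH t ht).sub_const (H a)).const_add ‖f a‖).add
        ((((hasDerivAt_id t).sub_const a).const_add 1).const_mul ε)).congr_deriv ?_
      simp
    have hβ_sq_deriv : ∀ t, a ≤ t → HasDerivAt (fun t => β t ^ 2) (2 * β t * (h t + ε)) t :=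
      fun t ht => ((hβ_deriv t ht).pow 2).congr_deriv (by ring)
    have hsq : ‖f b‖ ^ 2 ≤ β b ^ 2 :=
      image_le_of_deriv_right_lt_deriv_boundary' (f := fun t => ‖f t‖ ^ 2)
        (f' := fun t => 2 * ⟪f t, f' t⟫) (B := fun t => β t ^ 2)
        (B' := fun t => 2 * β t * (h t + ε))
        (fun t ht => ((hf t ht.1).norm_sq).continuousAt.continuousWithinAt)
        (fun t ht => ((hf t ht.1).norm_sq).hasDerivWithinAt)
        (pow_le_pow_left₀ (norm_nonneg _) (by simp [hβ, hε.le]) 2)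
        (fun t ht => (hβ_sq_deriv t ht.1).continuousAt.continuousWithinAt)
        (fun t ht => (hβ_sq_deriv t ht.1).hasDerivWithinAt)
        (fun t ht heq => by
          have hnorm : ‖f t‖ = β t := (sq_eq_sq₀ (norm_nonneg _) (hβ_pos t ht.1).le).1 heq
          calc 2 * ⟪f t, f' t⟫ = 2 * ⟪f' t, f t⟫ := by rw [real_inner_comm]
            _ ≤ 2 * (h t * β t) := by rw [← hnorm]; linarith [bound t ht.1]
            _ < 2 * β t * (h t + ε) := by nlinarith [hβ_pos t ht.1])
        (right_mem_Icc.2 hab)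
    exact (pow_le_pow_iff_left₀ (norm_nonneg _) (hβ_pos b hab).le two_ne_zero).1 hsq
  refine le_of_forall_pos_le_add fun δ hδ => ?_
  have hba : 0 < 1 + (b - a) := by linarith
  simpa [div_mul_cancel₀ δ hba.ne'] using hbarrier (δ / (1 + (b - a))) (by positivity)

theorem norm_le_exp_mul_of_inner_deriv_le {f f' : ℝ → E} {H h : ℝ → ℝ} {a b c : ℝ}
    (hf : ∀ t, a ≤ t → HasDerivAt f (f' t) t) (hH : ∀ t, a ≤ t → HasDerivAt H (h t) t)
    (hh : ∀ t, a ≤ t → 0 ≤ h t)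
    (bound : ∀ t, a ≤ t → ⟪f' t, f t⟫ ≤ -c * ‖f t‖ ^ 2 + exp (-c * t) * h t * ‖f t‖)
    (hab : a ≤ b) : ‖f b‖ ≤ exp (-c * b) * (exp (c * a) * ‖f a‖ + (H b - H a)) := by
  have hnorm : ∀ t, ‖exp (c * t) • f t‖ = exp (c * t) * ‖f t‖ := fun t => by
    rw [norm_smul, norm_of_nonneg (exp_pos _).le]
  have hweighted_deriv : ∀ t, a ≤ t → HasDerivAt (fun t => exp (c * t) • f t)
      (exp (c * t) • f' t + (exp (c * t) * c) • f t) t := fun t ht =>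
    (((hasDerivAt_id t).const_mul c).exp.congr_deriv (by simp)).smul (hf t ht)
  have hweighted_bound : ∀ t, a ≤ t →
      ⟪exp (c * t) • f' t + (exp (c * t) * c) • f t, exp (c * t) • f t⟫
        ≤ h t * ‖exp (c * t) • f t‖ := fun t ht => by
    have hexp : exp (c * t) * exp (-c * t) = 1 := by rw [← exp_add]; simp
    rw [hnorm, inner_add_left, real_inner_smul_left, real_inner_smul_right,
      real_inner_smul_left, real_inner_smul_right, real_inner_self_eq_norm_sq]
    have := mul_le_mul_of_nonneg_left (bound t ht) (sq_nonneg (exp (c * t)))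
    linear_combination this + (h t * ‖f t‖ * exp (c * t)) * hexp
  have := norm_le_add_of_inner_deriv_le_mul_norm hweighted_deriv hH hh hweighted_bound hab
  rw [hnorm, hnorm] at this
  calc ‖f b‖ = exp (-c * b) * (exp (c * b) * ‖f b‖) := by
        rw [← mul_assoc, ← exp_add]; simp
    _ ≤ _ := by gcongr

end

theorem stmt_11 {H : Type*} [NormedAddCommGroup H] [InnerProductSpace ℝ H]
    (l : ℕ) (hl : 1 ≤ l) (τ₀ C : ℝ) (hC : 0 < C)
    (Φ : ℝ → H) (Φ' : ℝ → H) (G : ℝ → ℝ)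
    (hderiv : ∀ τ, τ₀ ≤ τ → HasDerivAt Φ (Φ' τ) τ)
    (hineq : ∀ τ, τ₀ ≤ τ →
      (inner ℝ (Φ' τ) (Φ τ) : ℝ) ≤ -((l : ℝ) + 1) * ‖Φ τ‖ ^ 2
        + Real.exp (-τ) * G τ * ‖Φ τ‖)
    (hG : ∀ τ, τ₀ ≤ τ → G τ ≤ C * Real.exp (-(2 * (l : ℝ) - 1 / 2) * τ))
    (hΦ0 : Φ τ₀ = 0) :
    ∃ C' : ℝ, 0 < C' ∧ ∀ τ, τ₀ ≤ τ → ‖Φ τ‖ ≤ C' * Real.exp (-((l : ℝ) + 1) * τ) := by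
  set k : ℝ := (l : ℝ) - 1 / 2 with hk_def
  have hk : 0 < k := by
    have : (1 : ℝ) ≤ l := by exact_mod_cast hl
    linarith
  have hforcing : ∀ τ, τ₀ ≤ τ → ⟪Φ' τ, Φ τ⟫ ≤
      -((l : ℝ) + 1) * ‖Φ τ‖ ^ 2 + exp (-((l : ℝ) + 1) * τ) * (C * exp (-k * τ)) * ‖Φ τ‖ :=
    fun τ hτ => by
      have hexp : exp (-((l : ℝ) + 1) * τ) * (C * exp (-k * τ))
          = exp (-τ) * (C * exp (-(2 * (l : ℝ) - 1 / 2) * τ)) := by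
        rw [mul_left_comm, ← exp_add, mul_left_comm, ← exp_add, hk_def]
        ring_nf
      rw [hexp]
      exact (hineq τ hτ).trans (by gcongr; exact hG τ hτ)
  have hprimitive : ∀ τ, HasDerivAt (fun τ => -(C / k * exp (-k * τ))) (C * exp (-k * τ)) τ :=
    fun τ => by
      refine (((hasDerivAt_id' τ).const_mul (-k)).exp.const_mul (C / k)).neg.congr_deriv ?_
      field_simp
  refine ⟨C / k * exp (-k * τ₀), by positivity, fun τ hτ => ?_⟩
  have hΦτ := norm_le_exp_mul_of_inner_deriv_le hderiv (fun τ _ => hprimitive τ)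
    (fun τ _ => by positivity) hforcing hτ
  rw [hΦ0, norm_zero, mul_zero, zero_add] at hΦτ
  calc ‖Φ τ‖ ≤ exp (-((l : ℝ) + 1) * τ) * (-(C / k * exp (-k * τ)) - -(C / k * exp (-k * τ₀))) :=
        hΦτ
    _ ≤ exp (-((l : ℝ) + 1) * τ) * (C / k * exp (-k * τ₀)) := by
        gcongr
        linarith [show 0 < C / k * exp (-k * τ) by positivity]
    _ = C / k * exp (-k * τ₀) * exp (-((l : ℝ) + 1) * τ) := mul_comm _ _
end
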